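/- arXiv:1406.3558 — 9 statements merged into one kernel-verified Lean document; each statement's English description precedes it below -/
import Mathlib

section
/- Let A be a set of n integers and let 0 ≤ k < n. Then (k+1)·|S_{k+1}| ≤ n·|S_k|. -/
/-!
Double counting on the bipartite graph joining `s ∈ S_{k+1}` to `t ∈ S_k` when `s - t ∈ A`.
If `s` is the sum of a `(k+1)`-set `B`, then the `k + 1` distinct elements `s - b`, `b ∈ B`, are
sums of `k`-subsets of `B`, so `s` has at least `k + 1` neighbours; each `t` has at most `|A|`
neighbours, namely among the `t + a`.
-/

namespace Finset

variable {G : Type*} [AddCommGroup G] [DecidableEq G]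

def subsetSums (A : Finset G) (k : ℕ) : Finset G :=
  (A.powersetCard k).image (fun B => B.sum id)

theorem sum_sub_mem_subsetSums {A B : Finset G} {k : ℕ} (hB : B ∈ A.powersetCard (k + 1))
    {b : G} (hb : b ∈ B) : B.sum id - b ∈ A.subsetSums k := by
  rw [mem_powersetCard] at hB
  refine mem_image.mpr ⟨B.erase b, mem_powersetCard.mpr ⟨(erase_subset b B).trans hB.1, ?_⟩, ?_⟩
  · rw [card_erase_of_mem hb, hB.2, Nat.add_sub_cancel]
  · rw [sum_erase_eq_sub hb, id]

theorem succ_le_card_bipartiteAbove_subsetSums (A : Finset G) (k : ℕ) {s : G}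
    (hs : s ∈ A.subsetSums (k + 1)) :
    k + 1 ≤ #(bipartiteAbove (fun x y => x - y ∈ A) (A.subsetSums k) s) := by
  obtain ⟨B, hB, rfl⟩ := mem_image.mp hs
  have hsub : B.image (B.sum id - ·) ⊆
      bipartiteAbove (fun x y => x - y ∈ A) (A.subsetSums k) (B.sum id) := by
    intro t ht
    obtain ⟨b, hb, rfl⟩ := mem_image.mp ht
    refine (mem_bipartiteAbove _).mpr ⟨sum_sub_mem_subsetSums hB hb, ?_⟩
    simpa using (mem_powersetCard.mp hB).1 hb
  calc k + 1 = #B := (mem_powersetCard.mp hB).2.symm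
    _ = #(B.image (B.sum id - ·)) := (card_image_of_injective _ sub_right_injective).symm
    _ ≤ _ := card_le_card hsub

theorem card_bipartiteBelow_sub_mem_le (A S : Finset G) (t : G) :
    #(bipartiteBelow (fun x y => x - y ∈ A) S t) ≤ #A :=
  card_le_card_of_injOn (· - t) (fun _ hs => ((mem_bipartiteBelow _).mp hs).2)
    (fun _ _ _ _ h => sub_left_injective h)

theorem succ_mul_card_subsetSums_succ_le (A : Finset G) (k : ℕ) :
    (k + 1) * #(A.subsetSums (k + 1)) ≤ #A * #(A.subsetSums k) := by
  rw [mul_comm, mul_comm #A]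
  exact card_mul_le_card_mul _ (fun _ hs => succ_le_card_bipartiteAbove_subsetSums A k hs)
    (fun t _ => card_bipartiteBelow_sub_mem_le A _ t)

end Finset

theorem stmt_3_general (A : Finset ℤ) (n k : ℕ) (hn : A.card = n) :
    (k + 1) * ((A.powersetCard (k + 1)).image (fun B => B.sum id)).card ≤
      n * ((A.powersetCard k).image (fun B => B.sum id)).card :=
  hn ▸ A.succ_mul_card_subsetSums_succ_le k

/-- Let `A` be a set of `n` integers and let `0 ≤ k < n`. Then `(k+1)·|S_{k+1}| ≤ n·|S_k|`,
where `S_k` is the set of sums of `k`-element subsets of `A`. -/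
theorem stmt_3 (A : Finset ℤ) (n k : ℕ) (hn : A.card = n) (hk : k < n) :
    (k + 1) * ((A.powersetCard (k + 1)).image (fun B => B.sum id)).card ≤
      n * ((A.powersetCard k).image (fun B => B.sum id)).card :=
  stmt_3_general A n k hn
end

section
/- (Nathanson) Let n ≥ 1 and let K ⊆ ℝⁿ be a compact set such that for every x ∈ ℝⁿ there exists y ∈ K with x - y ∈ ℤⁿ. Then the set A := (K - K) ∩ ℤⁿ is finite and generates the additive group ℤⁿ, i.e., the subgroup of ℤⁿ generated by A is all of ℤⁿ. -/
/-!
Let `H` be the subgroup generated by `A = (K - K) ∩ ℤⁿ`. Since `ℤⁿ` is closed and discrete, the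
lattice points outside the compact set `K - K` stay at distance at least some `ε > 0` from it.
Hence if `x'` lies in `H + K` and `x` is `ε`-close to `x'`, writing `x = v + y` with `v ∈ ℤⁿ`,
`y ∈ K` shows that `v` differs from an element of `H` by a lattice point of `K - K`, so `x ∈ H + K`
as well. Thus `H + K` is clopen and nonempty, hence all of the connected space `ℝⁿ`, and then every
lattice point lies in `H`.
-/

open Pointwise Set Metric Topology

variable {ι : Type*}

def intLattice (ι : Type*) : AddSubgroup (ι → ℝ) where
  carrier := {v | ∀ i, ∃ m : ℤ, v i = m}
  zero_mem' _ := ⟨0, by simp⟩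
  add_mem' ha hb i := by
    obtain ⟨p, hp⟩ := ha i
    obtain ⟨q, hq⟩ := hb i
    exact ⟨p + q, by simp [hp, hq]⟩
  neg_mem' ha i := by
    obtain ⟨p, hp⟩ := ha i
    exact ⟨-p, by simp [hp]⟩

lemma coe_intLattice_eq_range :
    (intLattice ι : Set (ι → ℝ)) = range (Pi.map fun _ ↦ ((↑) : ℤ → ℝ)) := by
  ext v
  refine ⟨fun hv ↦ ?_, ?_⟩
  · choose z hz using hv
    exact ⟨z, funext fun i ↦ (hz i).symm⟩
  · rintro ⟨z, rfl⟩ i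
    exact ⟨z i, rfl⟩

lemma isClosedEmbedding_piMap_intCast :
    IsClosedEmbedding (Pi.map fun (_ : ι) ↦ ((↑) : ℤ → ℝ)) :=
  .piMap fun _ ↦ Int.isClosedEmbedding_coe_real

lemma isClosed_of_subset_intLattice [Finite ι] {S : Set (ι → ℝ)} (hS : S ⊆ intLattice ι) :
    IsClosed S := by
  rw [coe_intLattice_eq_range] at hS
  rw [← image_preimage_eq_of_subset hS]
  exact isClosedEmbedding_piMap_intCast.isClosedMap _ (isClosed_discrete _)

lemma IsCompact.finite_inter_intLattice [Finite ι] {C : Set (ι → ℝ)} (hC : IsCompact C) :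
    (C ∩ intLattice ι).Finite := by
  rw [coe_intLattice_eq_range, ← image_preimage_eq_inter_range]
  exact (isClosedEmbedding_piMap_intCast.isCompact_preimage hC).finite_of_discrete.image _

lemma IsCompact.sub {G : Type*} [TopologicalSpace G] [AddGroup G] [IsTopologicalAddGroup G]
    {s t : Set G} (hs : IsCompact s) (ht : IsCompact t) : IsCompact (s - t) := by
  rw [sub_eq_add_neg]
  exact hs.add ht.neg

lemma IsCompact.exists_pos_forall_dist_lt_imp_mem {X : Type*} [PseudoMetricSpace X]
    {C F : Set X} (hC : IsCompact C) (hF : IsClosed (F \ C)) :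
    ∃ ε > 0, ∀ v ∈ F, ∀ w ∈ C, dist v w < ε → v ∈ C := by
  obtain ⟨ε, hε, hdisj⟩ := (disjoint_sdiff_right : Disjoint C (F \ C)).exists_thickenings hC hF
  refine ⟨ε, hε, fun v hv w hw hvw ↦ by_contra fun hvC ↦ ?_⟩
  exact disjoint_left.1 hdisj (mem_thickening_iff.2 ⟨w, hw, hvw⟩)
    (self_subset_thickening hε _ ⟨hv, hvC⟩)

lemma eq_univ_of_forall_dist_lt_imp_mem {X : Type*} [PseudoMetricSpace X] [PreconnectedSpace X]
    {S : Set X} {ε : ℝ} (hε : 0 < ε) (hS : ∀ x x', dist x x' < ε → x' ∈ S → x ∈ S)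
    (hne : S.Nonempty) : S = univ := by
  refine IsClopen.eq_univ ⟨?_, ?_⟩ hne
  · refine isOpen_compl_iff.1 <| isOpen_iff.2 fun x hx ↦ ⟨ε, hε, fun x' hx' hx'S ↦ ?_⟩
    exact hx (hS x x' (by rwa [dist_comm]) hx'S)
  · exact isOpen_iff.2 fun x' hx' ↦ ⟨ε, hε, fun x hx ↦ hS x x' hx hx'⟩

theorem closure_sub_inter_intLattice_eq [Fintype ι] {K : Set (ι → ℝ)} (hK : IsCompact K)
    (hcover : ∀ x, ∃ y ∈ K, x - y ∈ intLattice ι) :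
    AddSubgroup.closure ((K - K) ∩ intLattice ι) = intLattice ι := by
  set H := AddSubgroup.closure ((K - K) ∩ intLattice ι)
  have hHL : H ≤ intLattice ι := AddSubgroup.closure_le _ |>.2 inter_subset_right
  obtain ⟨ε, hε, hnear⟩ := (hK.sub hK).exists_pos_forall_dist_lt_imp_mem
    (isClosed_of_subset_intLattice (sdiff_subset (t := K - K)))
  have hmem : ∀ v ∈ intLattice ι, ∀ w ∈ K - K, dist v w < ε → v ∈ H := fun v hv w hw hvw ↦
    AddSubgroup.subset_closure ⟨hnear v hv w hw hvw, hv⟩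
  have hsat : ∀ x x', dist x x' < ε → x' ∈ (H : Set (ι → ℝ)) + K →
      x ∈ (H : Set (ι → ℝ)) + K := by
    rintro x _ hxx' ⟨h, hh, k, hk, rfl⟩
    obtain ⟨y, hy, hxy⟩ := hcover x
    have hdist : dist (x - y - h) (k - y) = dist x (h + k) := by
      rw [dist_eq_norm, dist_eq_norm]
      congr 1
      abel
    have hv : x - y - h ∈ H :=
      hmem _ (sub_mem hxy (hHL hh)) _ (sub_mem_sub hk hy) (hdist ▸ hxx')
    exact ⟨x - y, sub_add_cancel (x - y) h ▸ add_mem hv hh, y, hy, sub_add_cancel x y⟩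
  obtain ⟨y, hy, -⟩ := hcover 0
  have hHK : (H : Set (ι → ℝ)) + K = univ :=
    eq_univ_of_forall_dist_lt_imp_mem hε hsat ⟨0 + y, add_mem_add H.zero_mem hy⟩
  refine le_antisymm hHL fun v hv ↦ ?_
  obtain ⟨h, hh, k, hk, hvy⟩ := mem_add.1 (hHK ▸ mem_univ (v + y))
  have hdiff : v - h = k - y := sub_eq_sub_iff_add_eq_add.2 (hvy.symm.trans (add_comm h k))
  have hvh : v - h ∈ H :=
    hmem _ (sub_mem hv (hHL hh)) _ (sub_mem_sub hk hy) (by rwa [hdiff, dist_self])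
  exact sub_add_cancel v h ▸ add_mem hvh hh

theorem stmt_7_general (n : ℕ) (K : Set (Fin n → ℝ)) (hK : IsCompact K)
    (hcover : ∀ x : Fin n → ℝ, ∃ y ∈ K, ∀ i, ∃ m : ℤ, x i - y i = (m : ℝ)) :
    ((K - K) ∩ {v : Fin n → ℝ | ∀ i, ∃ m : ℤ, v i = (m : ℝ)}).Finite ∧
      (AddSubgroup.closure ((K - K) ∩ {v : Fin n → ℝ | ∀ i, ∃ m : ℤ, v i = (m : ℝ)}) :
          Set (Fin n → ℝ)) =
        {v : Fin n → ℝ | ∀ i, ∃ m : ℤ, v i = (m : ℝ)} := by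
  exact ⟨(hK.sub hK).finite_inter_intLattice,
    congrArg SetLike.coe (closure_sub_inter_intLattice_eq hK hcover)⟩

/-- (Nathanson) Let `K ⊆ ℝⁿ` be a compact set such that every `x ∈ ℝⁿ` is congruent modulo
`ℤⁿ` to some `y ∈ K`. Then `A := (K - K) ∩ ℤⁿ` is finite and generates the additive
group `ℤⁿ`. -/
theorem stmt_7 (n : ℕ) (hn : 1 ≤ n) (K : Set (Fin n → ℝ)) (hK : IsCompact K)
    (hcover : ∀ x : Fin n → ℝ, ∃ y ∈ K, ∀ i, ∃ m : ℤ, x i - y i = (m : ℝ)) :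
    ((K - K) ∩ {v : Fin n → ℝ | ∀ i, ∃ m : ℤ, v i = (m : ℝ)}).Finite ∧
      (AddSubgroup.closure ((K - K) ∩ {v : Fin n → ℝ | ∀ i, ∃ m : ℤ, v i = (m : ℝ)}) :
          Set (Fin n → ℝ)) =
        {v : Fin n → ℝ | ∀ i, ∃ m : ℤ, v i = (m : ℝ)} :=
  stmt_7_general n K hK hcover
end

section
/- (Schnirelmann) Let A, B be sets of nonnegative integers with 0 ∈ A and 0 ∈ B. Then σ(A+B) ≥ σ(A) + σ(B) - σ(A)·σ(B). -/
/-!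
Let `a` be the largest element of `A` in `[0, n]`. If `a < n`, the interval `(a, n]` misses `A`
but contains `a + b` for every `b ∈ B ∩ (0, n - a]`, so it holds at least `σ(B) (n - a)` elements
of `A + B`; if `a = n`, both `A` and `A + B` gain the element `n` over `[0, n - 1]`.
By strong induction on `n` this gives `(A+B)(n) ≥ A(n) + σ(B) (n - A(n))`, and the
right-hand side is `σ(B) n + (1 - σ(B)) A(n) ≥ (σ(A) + σ(B) - σ(A) σ(B)) n`.
-/

open scoped Classical Pointwise

open Finset

theorem Finset.card_filter_Ioc_add_card_filter_Ioc {α : Type*} [LinearOrder α]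
    [LocallyFiniteOrder α] (p : α → Prop) [DecidablePred p] {a b c : α} (hab : a ≤ b)
    (hbc : b ≤ c) :
    #{x ∈ Ioc a b | p x} + #{x ∈ Ioc b c | p x} = #{x ∈ Ioc a c | p x} := by
  rw [← card_union_of_disjoint (disjoint_filter_filter (Ioc_disjoint_Ioc_of_le le_rfl)),
    ← filter_union, Ioc_union_Ioc_eq_Ioc hab hbc]

theorem card_filter_Ioc_le_card_filter_Ioc_add {A B : Set ℕ} {a : ℕ} (ha : a ∈ A) (m : ℕ) :
    #{b ∈ Ioc 0 m | b ∈ B} ≤ #{x ∈ Ioc a (a + m) | x ∈ A + B} :=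
  card_le_card_of_injOn (a + ·)
    (fun b hb => by
      simp only [coe_filter, mem_Ioc, Set.mem_ofPred_eq] at hb ⊢
      exact ⟨by omega, Set.add_mem_add ha hb.2⟩)
    (add_right_injective a).injOn

theorem Nat.card_filter_Ioc_succ_of_mem (p : ℕ → Prop) [DecidablePred p] {k : ℕ}
    (hk : p (k + 1)) : #{x ∈ Ioc 0 (k + 1) | p x} = #{x ∈ Ioc 0 k | p x} + 1 := by
  rw [← card_filter_Ioc_add_card_filter_Ioc p (Nat.zero_le k) k.le_succ, Nat.Ioc_succ_singleton,
    filter_singleton, if_pos hk, card_singleton]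

theorem le_card_filter_Ioc_add {A B : Set ℕ} (hA : 0 ∈ A) (hB : 0 ∈ B) {β : ℝ}
    (hβ : ∀ m : ℕ, β * m ≤ #{b ∈ Ioc 0 m | b ∈ B}) (n : ℕ) :
    (#{x ∈ Ioc 0 n | x ∈ A} : ℝ) + β * (n - #{x ∈ Ioc 0 n | x ∈ A}) ≤
      #{x ∈ Ioc 0 n | x ∈ A + B} := by
  induction n using Nat.strong_induction_on with
  | _ n ih =>
  set a := Nat.findGreatest (· ∈ A) n
  have ha : a ∈ A := Nat.findGreatest_spec (Nat.zero_le n) hA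
  rcases (Nat.findGreatest_le n : a ≤ n).lt_or_eq with hlt | heq
  · have hsplit (S : Set ℕ) :
        #{x ∈ Ioc 0 n | x ∈ S} = #{x ∈ Ioc 0 a | x ∈ S} + #{x ∈ Ioc a n | x ∈ S} :=
      (card_filter_Ioc_add_card_filter_Ioc _ (Nat.zero_le a) hlt.le).symm
    have hgapA : #{x ∈ Ioc a n | x ∈ A} = 0 :=
      card_eq_zero.2 <| filter_eq_empty_iff.2 fun x hx =>
        Nat.findGreatest_is_greatest (mem_Ioc.1 hx).1 (mem_Ioc.1 hx).2
    have hgapAB : (#{b ∈ Ioc 0 (n - a) | b ∈ B} : ℝ) ≤ #{x ∈ Ioc a n | x ∈ A + B} := by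
      exact_mod_cast Nat.add_sub_cancel' hlt.le ▸
        card_filter_Ioc_le_card_filter_Ioc_add (B := B) ha (n - a)
    have hB_gap := hβ (n - a)
    rw [Nat.cast_sub hlt.le] at hB_gap
    rw [hsplit, hsplit, hgapA]
    push_cast
    linarith [ih a hlt]
  · obtain _ | k := n
    · simp
    · have hk : k + 1 ∈ A := heq ▸ ha
      rw [Nat.card_filter_Ioc_succ_of_mem _ hk,
        Nat.card_filter_Ioc_succ_of_mem _ (add_zero (k + 1) ▸ Set.add_mem_add hk hB)]
      push_cast
      linarith [ih k k.lt_succ_self]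

/-- (Schnirelmann) Let `A, B` be sets of nonnegative integers with `0 ∈ A` and `0 ∈ B`.
Then `σ(A+B) ≥ σ(A) + σ(B) - σ(A)·σ(B)`, where `σ` denotes the Schnirelmann density
`σ(A) = inf_{n ≥ 1} A(n)/n` with `A(n) = #{a ∈ A : 1 ≤ a ≤ n}`. -/
theorem stmt_8 (A B : Set ℕ) (hA : 0 ∈ A) (hB : 0 ∈ B) :
    schnirelmannDensity (A + B) ≥
      schnirelmannDensity A + schnirelmannDensity B -
        schnirelmannDensity A * schnirelmannDensity B := by
  rw [ge_iff_le, le_schnirelmannDensity_iff]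
  intro n hn
  set α := schnirelmannDensity A
  set β := schnirelmannDensity B
  have hα : α * n ≤ #{x ∈ Ioc 0 n | x ∈ A} := schnirelmannDensity_mul_le_card_filter
  have hβ : β ≤ 1 := schnirelmannDensity_le_one
  rw [le_div_iff₀ (by exact_mod_cast hn)]
  calc (α + β - α * β) * n = β * n + (1 - β) * (α * n) := by ring
    _ ≤ β * n + (1 - β) * #{x ∈ Ioc 0 n | x ∈ A} := by gcongr
    _ = #{x ∈ Ioc 0 n | x ∈ A} + β * (n - #{x ∈ Ioc 0 n | x ∈ A}) := by ring
    _ ≤ #{x ∈ Ioc 0 n | x ∈ A + B} :=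
      le_card_filter_Ioc_add hA hB (fun _ => schnirelmannDensity_mul_le_card_filter) n
end

section
/- (Nathanson–Nash) Let A be a set of nonnegative integers with 0 ∈ A and A ≠ {0}, and let d = gcd(A) be the greatest common divisor of the elements of A. If for some h ≥ 1 the h-fold sumset hA has positive lower asymptotic density, then there exists h₀ ≥ 1 such that h₀A eventually coincides with the set of nonnegative multiples of d: there is N such that for all n ≥ N, n ∈ h₀A if and only if d divides n. -/
open scoped Classical Pointwise

/-- The counting function `#(S ∩ [1,n])` of a set of nonnegative integers. -/
noncomputable def countingFn (S : Set ℕ) (n : ℕ) : ℕ :=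
  ((Finset.Icc 1 n).filter (· ∈ S)).card

/-!
Write `σ` for Schnirelmann density. By Schur's theorem (`Nat.exists_mem_closure_of_ge`) every
large multiple of `d` is a sum of elements of `A`, so for suitable `t` and `H` the set
`C = {c | d c + d t ∈ H A}` contains `0`, `1` and the rescaled sumset `{c | d c ∈ h A}`. The
latter has positive lower density, hence `σ C > 0`. Schnirelmann's inequality
`1 - σ(B + C) ≤ (1 - σ B)(1 - σ C)` gives `σ(k C) ≥ 1/2` for some `k`, so `2k C = ℕ` by
pigeonhole; translating back, every multiple of `d` from `2kdt` on lies in `2kH A`.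
-/

open Finset

theorem card_filter_Ioc_zero_add (p : ℕ → Prop) [DecidablePred p] (b g : ℕ) :
    #{m ∈ Ioc 0 (b + g) | p m} = #{m ∈ Ioc 0 b | p m} + #{j ∈ Ioc 0 g | p (b + j)} := by
  have hshift : Ioc b (b + g) = (Ioc 0 g).map (addLeftEmbedding b) := by simp
  rw [← Ioc_union_Ioc_eq_Ioc (Nat.zero_le b) (Nat.le_add_right b g), filter_union,
    card_union_of_disjoint (disjoint_filter_filter (Ioc_disjoint_Ioc_of_le le_rfl)),
    hshift, filter_map, card_map]
  rfl

theorem card_filter_Ioc_succ_of_mem {S : Set ℕ} {n : ℕ} (hn : n + 1 ∈ S) :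
    #{m ∈ Ioc 0 (n + 1) | m ∉ S} = #{m ∈ Ioc 0 n | m ∉ S} := by
  simp [card_filter_Ioc_zero_add, hn]

theorem card_filter_Ioc_notMem_le (A : Set ℕ) (n : ℕ) :
    (#{m ∈ Ioc 0 n | m ∉ A} : ℝ) ≤ (1 - schnirelmannDensity A) * n := by
  have hsplit := card_filter_add_card_filter_not (s := Ioc 0 n) (· ∈ A)
  rw [Nat.card_Ioc, Nat.sub_zero] at hsplit
  have hσ := schnirelmannDensity_mul_le_card_filter (A := A) (n := n)
  have : (#{m ∈ Ioc 0 n | m ∈ A} : ℝ) + #{m ∈ Ioc 0 n | m ∉ A} = n := by exact_mod_cast hsplit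
  linarith

section Schnirelmann

variable {B C : Set ℕ}

/-- Schnirelmann's inequality in terms of missed elements: inside a gap `(b, b + g]` of `B`, with
`b ∈ B`, the set `b + C ⊆ B + C` leaves at most `(1 - σ C) g` elements uncovered. -/
theorem card_filter_Ioc_notMem_add_le (hB : 0 ∈ B) (hC : 0 ∈ C) (n : ℕ) :
    (#{m ∈ Ioc 0 n | m ∉ B + C} : ℝ) ≤
      (1 - schnirelmannDensity C) * #{m ∈ Ioc 0 n | m ∉ B} := by
  induction n using Nat.strong_induction_on with
  | _ n ih =>
  obtain ⟨b, hbn, hb, hgap⟩ : ∃ b ≤ n, b ∈ B ∧ ∀ j, b < j → j ≤ n → j ∉ B :=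
    ⟨_, Nat.findGreatest_le n, Nat.findGreatest_spec (Nat.zero_le n) hB,
      fun _ => Nat.findGreatest_is_greatest⟩
  obtain ⟨g, rfl⟩ := Nat.exists_eq_add_of_le hbn
  rcases Nat.eq_zero_or_pos g with rfl | hg
  · rcases b with _ | b
    · simp
    rw [add_zero, card_filter_Ioc_succ_of_mem (Set.subset_add_left B hC hb),
      card_filter_Ioc_succ_of_mem hb]
    exact ih b (by omega)
  · have hBgap : ∀ j ∈ Ioc 0 g, b + j ∉ B := fun j hj => by
      rw [mem_Ioc] at hj
      exact hgap _ (by omega) (by omega)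
    have hBCgap : #{j ∈ Ioc 0 g | b + j ∉ B + C} ≤ #{j ∈ Ioc 0 g | j ∉ C} :=
      card_le_card (monotone_filter_right _ fun j _ hj hjC => hj (Set.add_mem_add hb hjC))
    rw [card_filter_Ioc_zero_add _ b g, card_filter_Ioc_zero_add _ b g, filter_true_of_mem hBgap,
      Nat.card_Ioc, Nat.sub_zero]
    calc ((#{m ∈ Ioc 0 b | m ∉ B + C} + #{j ∈ Ioc 0 g | b + j ∉ B + C} : ℕ) : ℝ)
        ≤ #{m ∈ Ioc 0 b | m ∉ B + C} + #{j ∈ Ioc 0 g | j ∉ C} := by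
          push_cast; gcongr
      _ ≤ (1 - schnirelmannDensity C) * #{m ∈ Ioc 0 b | m ∉ B} +
            (1 - schnirelmannDensity C) * g :=
          add_le_add (ih b (by omega)) (card_filter_Ioc_notMem_le C _)
      _ = _ := by push_cast; ring

theorem one_sub_schnirelmannDensity_add_le (hB : 0 ∈ B) (hC : 0 ∈ C) :
    1 - schnirelmannDensity (B + C) ≤
      (1 - schnirelmannDensity B) * (1 - schnirelmannDensity C) := by
  rw [sub_le_comm, le_schnirelmannDensity_iff]
  intro n hn
  have hn' : (0 : ℝ) < n := by exact_mod_cast hn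
  have hsplit := card_filter_add_card_filter_not (s := Ioc 0 n) (· ∈ B + C)
  rw [Nat.card_Ioc, Nat.sub_zero] at hsplit
  have hcount : (#{m ∈ Ioc 0 n | m ∈ B + C} : ℝ) + #{m ∈ Ioc 0 n | m ∉ B + C} = n := by
    exact_mod_cast hsplit
  have h1 := card_filter_Ioc_notMem_add_le hB hC n
  have h2 := card_filter_Ioc_notMem_le B n
  have h3 : 0 ≤ 1 - schnirelmannDensity C := sub_nonneg.2 schnirelmannDensity_le_one
  rw [le_div_iff₀ hn']
  nlinarith [mul_le_mul_of_nonneg_left h2 h3]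

theorem one_sub_schnirelmannDensity_nsmul_le (hC : 0 ∈ C) (k : ℕ) :
    1 - schnirelmannDensity (k • C) ≤ (1 - schnirelmannDensity C) ^ k := by
  induction k with
  | zero => simpa using schnirelmannDensity_nonneg
  | succ k ih =>
    rw [succ_nsmul, pow_succ]
    exact (one_sub_schnirelmannDensity_add_le (Set.zero_mem_nsmul hC) hC).trans
      (mul_le_mul_of_nonneg_right ih (sub_nonneg.2 schnirelmannDensity_le_one))

theorem exists_nsmul_eq_univ_of_schnirelmannDensity_pos (hC : 0 ∈ C)
    (hσ : 0 < schnirelmannDensity C) : ∃ k, 0 < k ∧ k • C = Set.univ := by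
  obtain ⟨k, hk⟩ := exists_pow_lt_of_lt_one (one_half_pos (α := ℝ)) (sub_lt_self 1 hσ)
  have hk0 : k ≠ 0 := by rintro rfl; norm_num at hk
  refine ⟨k + k, by omega, ?_⟩
  rw [add_nsmul]
  refine add_eq_univ_of_one_le_schirelmannDensity_add_schnirelmannDensity
    (Set.zero_mem_nsmul hC) (Set.zero_mem_nsmul hC) ?_
  linarith [one_sub_schnirelmannDensity_nsmul_le hC k]

end Schnirelmann

theorem schnirelmannDensity_pos_of_one_mem {S : Set ℕ} (h1 : 1 ∈ S) {α : ℝ} (hα : 0 < α)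
    (hS : ∀ᶠ n in Filter.atTop, α * n ≤ #{m ∈ Ioc 0 n | m ∈ S}) :
    0 < schnirelmannDensity S := by
  obtain ⟨N, hN⟩ := Filter.eventually_atTop.1 hS
  refine (lt_min hα (Nat.one_div_pos_of_nat (n := N))).trans_le
    (le_schnirelmannDensity_iff.2 fun n hn => ?_)
  have hn' : (0 : ℝ) < n := by exact_mod_cast hn
  rw [le_div_iff₀ hn']
  rcases le_or_gt N n with hNn | hnN
  · exact (mul_le_mul_of_nonneg_right (min_le_left _ _) hn'.le).trans (hN n hNn)
  · have h1n : 1 ≤ #{m ∈ Ioc 0 n | m ∈ S} :=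
      card_pos.2 ⟨1, mem_filter.2 ⟨mem_Ioc.2 ⟨one_pos, hn⟩, h1⟩⟩
    calc min α (1 / (N + 1)) * n ≤ 1 / (N + 1) * (N + 1) := by
          gcongr
          · exact min_le_right _ _
          · exact_mod_cast hnN.le.trans (Nat.le_succ N)
      _ ≤ _ := by
          rw [one_div_mul_cancel (by positivity)]
          exact_mod_cast h1n

theorem exists_mem_nsmul_of_mem_closure {M : Type*} [AddMonoid M] {s : Set M} (h0 : 0 ∈ s)
    {x : M} (hx : x ∈ AddSubmonoid.closure s) : ∃ k : ℕ, x ∈ k • s := by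
  induction hx using AddSubmonoid.closure_induction with
  | mem x hx => exact ⟨1, by rwa [one_nsmul]⟩
  | zero => exact ⟨0, Set.zero_mem_nsmul h0⟩
  | add x y _ _ hx hy =>
    obtain ⟨⟨j, hj⟩, ⟨k, hk⟩⟩ := And.intro hx hy
    exact ⟨j + k, by rw [add_nsmul]; exact Set.add_mem_add hj hk⟩

theorem map_add_nsmul_mem_nsmul {M N : Type*} [AddMonoid M] [AddCommMonoid N] (f : M →+ N)
    {C : Set M} {D : Set N} {t : N} (hCD : ∀ c ∈ C, f c + t ∈ D) :
    ∀ (k : ℕ) {x : M}, x ∈ k • C → f x + k • t ∈ k • D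
  | 0, x, hx => by
    rw [zero_nsmul, Set.mem_zero] at hx
    simp [hx]
  | k + 1, x, hx => by
    rw [succ_nsmul] at hx ⊢
    obtain ⟨y, hy, c, hc, rfl⟩ := hx
    convert Set.add_mem_add (map_add_nsmul_mem_nsmul f hCD k hy) (hCD c hc) using 1
    rw [map_add, succ_nsmul]
    abel

theorem Nat.setGcd_dvd_of_mem_nsmul {s : Set ℕ} {k x : ℕ} (hx : x ∈ k • s) : Nat.setGcd s ∣ x :=
  Nat.setGcd_dvd_of_mem_closure (AddSubmonoid.closure_nsmul_le (AddSubmonoid.subset_closure hx))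

theorem Nat.setGcd_eq_of_forall_dvd {s : Set ℕ} {d : ℕ} (hd₁ : ∀ a ∈ s, d ∣ a)
    (hd₂ : ∀ e : ℕ, (∀ a ∈ s, e ∣ a) → e ∣ d) : Nat.setGcd s = d :=
  Nat.dvd_antisymm (hd₂ _ fun _ => Nat.setGcd_dvd_of_mem) (Nat.dvd_setGcd_iff.2 hd₁)

theorem mem_of_forall_mul_add_mem {S : Set ℕ} {d s n : ℕ} (hS : ∀ y, d * y + d * s ∈ S)
    (hn : d * s ≤ n) (hdn : d ∣ n) : n ∈ S := by
  obtain ⟨x, rfl⟩ := hdn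
  convert hS (x - s) using 1
  rcases Nat.eq_zero_or_pos d with rfl | hd
  · simp
  · rw [← mul_add, Nat.sub_add_cancel (Nat.le_of_mul_le_mul_left hn hd)]

theorem exists_pos_eventually_mul_le_countingFn {S : Set ℕ}
    (hS : 0 < Filter.liminf (fun n : ℕ => (countingFn S n : ℝ) / n) Filter.atTop) :
    ∃ α : ℝ, 0 < α ∧ ∀ᶠ n in Filter.atTop, α * n ≤ countingFn S n := by
  refine ⟨_, half_pos hS, ?_⟩
  have hbdd :
      Filter.IsBoundedUnder (· ≥ ·) Filter.atTop (fun n : ℕ => (countingFn S n : ℝ) / n) :=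
    Filter.isBoundedUnder_of ⟨0, fun n => by positivity⟩
  filter_upwards [Filter.eventually_lt_of_lt_liminf (half_lt_self hS) hbdd,
    Filter.eventually_gt_atTop 0] with n hn hn0
  exact ((lt_div_iff₀ (by exact_mod_cast hn0)).1 hn).le

theorem card_filter_Ioc_mul_le {S : Set ℕ} {d : ℕ} (hS : ∀ s ∈ S, d ∣ s) (m : ℕ) :
    #{x ∈ Ioc 0 (d * m) | x ∈ S} ≤ #{y ∈ Ioc 0 m | d * y ∈ S} := by
  refine (card_le_card fun x hx => ?_).trans (card_image_le (f := (d * ·)))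
  obtain ⟨hx, hxS⟩ := mem_filter.1 hx
  obtain ⟨y, rfl⟩ := hS _ hxS
  rw [mem_Ioc] at hx
  have hd : 0 < d := Nat.pos_of_mul_pos_right hx.1
  exact mem_image.2 ⟨y, mem_filter.2 ⟨mem_Ioc.2 ⟨Nat.pos_of_mul_pos_left hx.1,
    Nat.le_of_mul_le_mul_left hx.2 hd⟩, hxS⟩, rfl⟩

theorem schnirelmannDensity_pos_of_liminf_pos {S T : Set ℕ} {d : ℕ} (hd : 0 < d)
    (hS : ∀ s ∈ S, d ∣ s)
    (hdens : 0 < Filter.liminf (fun n : ℕ => (countingFn S n : ℝ) / n) Filter.atTop)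
    (hST : ∀ c, d * c ∈ S → c ∈ T) (h1 : 1 ∈ T) : 0 < schnirelmannDensity T := by
  obtain ⟨α, hα, hev⟩ := exists_pos_eventually_mul_le_countingFn hdens
  have hdm : Filter.Tendsto (fun m : ℕ => d * m) Filter.atTop Filter.atTop :=
    Filter.tendsto_id.const_mul_atTop' hd
  refine schnirelmannDensity_pos_of_one_mem h1 hα ?_
  filter_upwards [hdm.eventually hev] with m hm
  calc α * m ≤ α * (d * m : ℕ) := by gcongr; exact_mod_cast Nat.le_mul_of_pos_left m hd
    _ ≤ countingFn S (d * m) := hm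
    _ ≤ #{y ∈ Ioc 0 m | d * y ∈ S} := by exact_mod_cast card_filter_Ioc_mul_le hS m
    _ ≤ #{y ∈ Ioc 0 m | y ∈ T} := by
      exact_mod_cast card_le_card (monotone_filter_right _ fun c _ => hST c)

/-- (Nathanson–Nash) Let `A` be a set of nonnegative integers with `0 ∈ A` and `A ≠ {0}`,
and let `d = gcd(A)`. If for some `h ≥ 1` the `h`-fold sumset `hA` has positive lower
asymptotic density, then there exists `h₀ ≥ 1` such that `h₀A` eventually coincides with
the set of nonnegative multiples of `d`. -/
theorem stmt_9 (A : Set ℕ) (h0 : 0 ∈ A) (hA : A ≠ {0}) (d : ℕ)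
    (hd₁ : ∀ a ∈ A, d ∣ a) (hd₂ : ∀ e : ℕ, (∀ a ∈ A, e ∣ a) → e ∣ d)
    (hdens : ∃ h : ℕ, 1 ≤ h ∧
      0 < Filter.liminf (fun n : ℕ => (countingFn (h • A) n : ℝ) / n) Filter.atTop) :
    ∃ h₀ : ℕ, 1 ≤ h₀ ∧ ∃ N : ℕ, ∀ n ≥ N, (n ∈ h₀ • A ↔ d ∣ n) := by
  obtain ⟨h, hh, hdens⟩ := hdens
  have hd : 0 < d := Nat.pos_of_ne_zero fun hd => hA <| Set.eq_singleton_iff_unique_mem.2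
    ⟨h0, fun a ha => Nat.eq_zero_of_zero_dvd (hd ▸ hd₁ a ha)⟩
  have hgcd : Nat.setGcd A = d := Nat.setGcd_eq_of_forall_dvd hd₁ hd₂
  obtain ⟨t, ht⟩ := Nat.exists_mem_closure_of_ge A
  have hfold : ∀ m ≥ t, ∃ K, d * m ∈ K • A := fun m hm => exists_mem_nsmul_of_mem_closure h0
    (ht _ (hm.trans (Nat.le_mul_of_pos_left m hd)) (hgcd ▸ dvd_mul_right d m))
  obtain ⟨K₀, hK₀⟩ := hfold t le_rfl
  obtain ⟨K₁, hK₁⟩ := hfold (t + 1) (by omega)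
  set H := h + K₀ + K₁
  set C : Set ℕ := {c | d * c + d * t ∈ H • A}
  have hmono : ∀ {j}, j ≤ H → j • A ⊆ H • A := fun hj => Set.nsmul_subset_nsmul_right h0 hj
  have hC0 : 0 ∈ C := hmono (j := K₀) (by omega) (by simpa using hK₀)
  have hC1 : 1 ∈ C := hmono (j := K₁) (by omega) (by simpa [mul_add, add_comm] using hK₁)
  have hSC : ∀ c, d * c ∈ h • A → c ∈ C := fun c hc =>
    hmono (j := h + K₀) (by omega) (by rw [add_nsmul]; exact Set.add_mem_add hc hK₀)
  obtain ⟨k, hk, hkC⟩ := exists_nsmul_eq_univ_of_schnirelmannDensity_pos hC0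
    (schnirelmannDensity_pos_of_liminf_pos hd (fun _ => hgcd ▸ Nat.setGcd_dvd_of_mem_nsmul)
      hdens hSC hC1)
  refine ⟨k * H, Nat.mul_pos hk (by omega), d * (k * t), fun n hn =>
    ⟨hgcd ▸ Nat.setGcd_dvd_of_mem_nsmul, mem_of_forall_mul_add_mem (fun y => ?_) hn⟩⟩
  have := map_add_nsmul_mem_nsmul (AddMonoidHom.mulLeft d) (D := H • A) (fun c hc => hc) k
    (hkC ▸ Set.mem_univ y)
  rw [AddMonoidHom.coe_mulLeft, smul_eq_mul, mul_left_comm] at this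
  rwa [mul_nsmul']
end

section
/- (de Bruijn) Let B be a set of integers such that every integer n has a unique representation as a sum of finitely many distinct elements of B, i.e., for every n ∈ ℤ there is exactly one finite subset S ⊆ B with Σ_{b∈S} b = n. Then B contains exactly one odd integer. -/
/-!
Write `S n` for the representation of `n` and let `x ∈ B`. If `x ∉ S n` then
`S (n + x) = S n ∪ {x}`; if `x ∈ S n` then `S (n - x) = S n \ {x}`. Hence `x ∈ S (n + x)` iff
`x ∉ S n`: the sign `σₓ n = ±1` recording whether `x ∈ S n` is antiperiodic with antiperiod `x`.
Moreover `σ_c` is unchanged by a step `n ↦ n + b` (`b ≠ c`) whenever `b ∉ S n`.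

Since `S 1` sums to `1`, it contains an odd element. If `b ≠ c` were two odd elements of `B`,
then `N = b c` is an odd multiple of both, hence an antiperiod of `σ_b` and of `σ_c`. When
`b ∈ S n`, we get `b ∉ S (n + N)`, so one may step by `b` from `n + N` instead of from `n`; this
makes `σ_c` periodic with period `b`, hence with period `N`, contradicting antiperiodicity.
-/

theorem Function.Antiperiodic.odd_zsmul {α β : Type*} [AddGroup α] [InvolutiveNeg β]
    {f : α → β} {c : α} (h : Function.Antiperiodic f c) {m : ℤ} (hm : Odd m) :
    Function.Antiperiodic f (m • c) := by
  obtain ⟨k, rfl⟩ := hm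
  exact h.odd_zsmul_antiperiodic k

def HasUniqueSubsetSums (B : Set ℤ) : Prop :=
  ∀ n : ℤ, ∃! S : Finset ℤ, ↑S ⊆ B ∧ ∑ b ∈ S, b = n

namespace HasUniqueSubsetSums

variable {B : Set ℤ} (hB : HasUniqueSubsetSums B)

noncomputable def rep (n : ℤ) : Finset ℤ :=
  (hB n).exists.choose

theorem rep_subset (n : ℤ) : ↑(hB.rep n) ⊆ B :=
  (hB n).exists.choose_spec.1

theorem sum_rep (n : ℤ) : ∑ b ∈ hB.rep n, b = n :=
  (hB n).exists.choose_spec.2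

theorem rep_eq {n : ℤ} {S : Finset ℤ} (hS : ↑S ⊆ B) (hsum : ∑ b ∈ S, b = n) : hB.rep n = S :=
  (hB n).unique ⟨hB.rep_subset n, hB.sum_rep n⟩ ⟨hS, hsum⟩

theorem rep_add_of_notMem {x n : ℤ} (hx : x ∈ B) (hxn : x ∉ hB.rep n) :
    hB.rep (n + x) = insert x (hB.rep n) := by
  refine hB.rep_eq ?_ ?_
  · rw [Finset.coe_insert]
    exact Set.insert_subset hx (hB.rep_subset n)
  · rw [Finset.sum_insert hxn, hB.sum_rep, add_comm]

theorem rep_sub_of_mem {x n : ℤ} (hxn : x ∈ hB.rep n) :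
    hB.rep (n - x) = (hB.rep n).erase x := by
  refine hB.rep_eq ((Finset.coe_subset.mpr (Finset.erase_subset x _)).trans (hB.rep_subset n)) ?_
  rw [eq_sub_iff_add_eq, Finset.sum_erase_add _ _ hxn, hB.sum_rep]

theorem mem_rep_add_self_iff {x n : ℤ} (hx : x ∈ B) : x ∈ hB.rep (n + x) ↔ x ∉ hB.rep n := by
  by_cases hxn : x ∈ hB.rep n
  · have h := hB.rep_sub_of_mem (n := n + x) (x := x)
    rw [add_sub_cancel_right] at h
    refine iff_of_false (fun hmem => ?_) (not_not_intro hxn)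
    rw [h hmem] at hxn
    exact Finset.notMem_erase x _ hxn
  · simp [hB.rep_add_of_notMem hx hxn, hxn]

noncomputable def memSign (x n : ℤ) : ℤ :=
  if x ∈ hB.rep n then -1 else 1

theorem antiperiodic_memSign {x : ℤ} (hx : x ∈ B) : Function.Antiperiodic (hB.memSign x) x := by
  intro n
  by_cases hxn : x ∈ hB.rep n <;> simp [memSign, hB.mem_rep_add_self_iff hx, hxn]

theorem memSign_add_of_notMem {x y n : ℤ} (hxy : x ≠ y) (hy : y ∈ B) (hyn : y ∉ hB.rep n) :
    hB.memSign x (n + y) = hB.memSign x n := by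
  simp [memSign, hB.rep_add_of_notMem hy hyn, hxy]

theorem periodic_memSign_of_odd {b c : ℤ} (hb : b ∈ B) (hc : c ∈ B) (hbc : b ≠ c)
    (hb_odd : Odd b) (hc_odd : Odd c) : Function.Periodic (hB.memSign c) b := by
  intro n
  by_cases hbn : b ∈ hB.rep n
  · have hσb : Function.Antiperiodic (hB.memSign b) (b * c) := by
      simpa [mul_comm] using (hB.antiperiodic_memSign hb).odd_zsmul hc_odd
    have hσc : Function.Antiperiodic (hB.memSign c) (b * c) :=
      (hB.antiperiodic_memSign hc).odd_zsmul hb_odd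
    have hbN : b ∉ hB.rep (n + b * c) := by
      simpa [memSign, hbn] using hσb n
    calc hB.memSign c (n + b) = -hB.memSign c (n + b + b * c) := by rw [hσc, neg_neg]
      _ = -hB.memSign c (n + b * c + b) := by rw [add_right_comm]
      _ = -hB.memSign c (n + b * c) := by rw [hB.memSign_add_of_notMem hbc.symm hb hbN]
      _ = hB.memSign c n := by rw [hσc, neg_neg]
  · exact hB.memSign_add_of_notMem hbc.symm hb hbn

theorem eq_of_odd (hB : HasUniqueSubsetSums B) {b c : ℤ} (hb : b ∈ B) (hc : c ∈ B) (hb_odd : Odd b) (hc_odd : Odd c) :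
    b = c := by
  by_contra hbc
  have hper : Function.Periodic (hB.memSign c) (b * c) := by
    simpa [mul_comm] using (hB.periodic_memSign_of_odd hb hc hbc hb_odd hc_odd).zsmul c
  have hanti : Function.Antiperiodic (hB.memSign c) (b * c) :=
    (hB.antiperiodic_memSign hc).odd_zsmul hb_odd
  have h0 : hB.memSign c 0 = -hB.memSign c 0 := by
    rw [← hanti 0, hper 0]
  unfold memSign at h0
  split_ifs at h0
  norm_num at h0

theorem exists_odd_mem (hB : HasUniqueSubsetSums B) : ∃ b ∈ B, Odd b := by
  by_contra! hall
  have heven : Even (∑ b ∈ hB.rep 1, b) :=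
    Finset.even_sum _ fun b hb => Int.not_odd_iff_even.mp (hall b (hB.rep_subset 1 hb))
  rw [hB.sum_rep] at heven
  exact Int.not_even_one heven

end HasUniqueSubsetSums

/-- (de Bruijn) Let `B` be a set of integers such that every integer `n` has a unique
representation as a sum of finitely many distinct elements of `B`. Then `B` contains
exactly one odd integer. -/
theorem stmt_11 (B : Set ℤ)
    (h : ∀ n : ℤ, ∃! S : Finset ℤ, ↑S ⊆ B ∧ ∑ b ∈ S, b = n) :
    ∃! b : ℤ, b ∈ B ∧ Odd b := by
  obtain ⟨b, hb, hb_odd⟩ := HasUniqueSubsetSums.exists_odd_mem h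
  exact ⟨b, ⟨hb, hb_odd⟩, fun c hc => HasUniqueSubsetSums.eq_of_odd h hc.1 hb hc.2 hb_odd⟩
end

section
/- Let ε : ℕ → {-1, +1} take the value +1 for infinitely many indices and the value -1 for infinitely many indices. Then every integer n has a unique representation as a finite subset sum of the set {ε(i)·2^i : i ∈ ℕ}: there is exactly one finite set S ⊆ ℕ with Σ_{i∈S} ε(i)·2^i = n. -/
/-!
Existence: an even `n = 2m` is `m` written with the shifted signs `ε (i + 1)` and every exponent
raised by one; an odd `n` is `ε 0 + 2m` in the same way. Both steps shrink `|n|` once `|n| ≥ 2`,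
and `±1` is reached by the first index where `ε` takes that sign, which exists because each sign
occurs infinitely often (and keeps doing so after shifting). Uniqueness: at the least index where
two representations differ, the difference of the sums is `±ε m 2^m` modulo `2^(m+1)`, which is
nonzero because `ε m` is odd.
-/

open Finset

theorem Set.Infinite.setOf_add_one {p : ℕ → Prop} (h : {i | p i}.Infinite) :
    {i | p (i + 1)}.Infinite := by
  rw [← Nat.frequently_atTop_iff_infinite, ← Filter.frequently_map (m := (· + 1)),
    Filter.map_add_atTop_eq_nat]
  exact Nat.frequently_atTop_iff_infinite.mpr h

section SignedBinary

variable {ε : ℕ → ℤ}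

theorem sum_map_succ_mul_two_pow (S : Finset ℕ) :
    ∑ i ∈ S.map (addRightEmbedding 1), ε i * 2 ^ i = 2 * ∑ i ∈ S, ε (i + 1) * 2 ^ i := by
  rw [sum_map, mul_sum]
  exact sum_congr rfl fun i _ => by rw [addRightEmbedding_apply, pow_succ]; ring

theorem sum_insert_zero_map_succ_mul_two_pow (S : Finset ℕ) :
    ∑ i ∈ insert 0 (S.map (addRightEmbedding 1)), ε i * 2 ^ i =
      ε 0 + 2 * ∑ i ∈ S, ε (i + 1) * 2 ^ i := by
  rw [sum_insert (by simp), sum_map_succ_mul_two_pow, pow_zero, mul_one]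

theorem exists_sum_mul_two_pow_eq_apply (hε : ∀ i, ε i = 1 ∨ ε i = -1) (k : ℕ) :
    ∃ S : Finset ℕ, ∑ i ∈ S, ε i * 2 ^ i = ε k := by
  induction k generalizing ε with
  | zero => exact ⟨{0}, by simp⟩
  | succ k ih =>
    by_cases h0 : ε 0 = ε (k + 1)
    · exact ⟨{0}, by simp [h0]⟩
    -- `ε 0 = -ε (k + 1)`, so `ε (k + 1) = ε 0 + 2 ε (k + 1)`
    obtain ⟨S, hS⟩ := ih (ε := fun i => ε (i + 1)) fun i => hε (i + 1)
    refine ⟨insert 0 (S.map (addRightEmbedding 1)), ?_⟩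
    rw [sum_insert_zero_map_succ_mul_two_pow, hS]
    rcases hε 0 with h | h <;> rcases hε (k + 1) with h' | h' <;> simp_all

theorem exists_sum_mul_two_pow_eq (hε : ∀ i, ε i = 1 ∨ ε i = -1)
    (hpos : {i | ε i = 1}.Infinite) (hneg : {i | ε i = -1}.Infinite) (n : ℤ) :
    ∃ S : Finset ℕ, ∑ i ∈ S, ε i * 2 ^ i = n := by
  induction hN : n.natAbs using Nat.strong_induction_on generalizing ε n with
  | _ N ih =>
    subst hN
    by_cases hsmall : n.natAbs ≤ 1
    · obtain rfl | rfl | rfl : n = 0 ∨ n = 1 ∨ n = -1 := by omega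
      · exact ⟨∅, sum_empty⟩
      · obtain ⟨k, hk : ε k = 1⟩ := hpos.nonempty
        exact hk ▸ exists_sum_mul_two_pow_eq_apply hε k
      · obtain ⟨k, hk : ε k = -1⟩ := hneg.nonempty
        exact hk ▸ exists_sum_mul_two_pow_eq_apply hε k
    have ih' (m : ℤ) (hm : m.natAbs < n.natAbs) :
        ∃ S : Finset ℕ, ∑ i ∈ S, ε (i + 1) * 2 ^ i = m :=
      ih _ hm (fun i => hε (i + 1)) hpos.setOf_add_one hneg.setOf_add_one m rfl
    by_cases hn : Even n
    · obtain ⟨m, rfl⟩ := hn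
      obtain ⟨S, hS⟩ := ih' m (by omega)
      exact ⟨S.map (addRightEmbedding 1), by rw [sum_map_succ_mul_two_pow, hS, two_mul]⟩
    · obtain ⟨m, hm⟩ : Even (n - ε 0) := by
        rcases hε 0 with h | h <;> simp [h, Int.not_even_iff_odd.mp hn]
      obtain ⟨S, hS⟩ := ih' m (by rcases hε 0 with h | h <;> omega)
      exact ⟨insert 0 (S.map (addRightEmbedding 1)),
        by rw [sum_insert_zero_map_succ_mul_two_pow, hS]; omega⟩

theorem sum_mul_two_pow_ne_of_min_mem_sdiff (hε : ∀ i, Odd (ε i)) {S T : Finset ℕ} {m : ℕ}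
    (hm : m ∈ S \ T) (hmin : ∀ i ∈ symmDiff S T, m ≤ i) :
    ∑ i ∈ S, ε i * 2 ^ i ≠ ∑ i ∈ T, ε i * 2 ^ i := by
  intro h
  have hdiff : ε m * 2 ^ m + (∑ i ∈ (S \ T).erase m, ε i * 2 ^ i - ∑ i ∈ T \ S, ε i * 2 ^ i)
      = 0 := by
    rw [← add_sub_assoc, add_sum_erase _ (fun i => ε i * 2 ^ i) hm, sum_sdiff_sub_sum_sdiff, h,
      sub_self]
  have hdvd_term (i : ℕ) (hi : i ∈ symmDiff S T) (him : i ≠ m) : 2 ^ (m + 1) ∣ ε i * 2 ^ i :=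
    dvd_mul_of_dvd_right (pow_dvd_pow 2 (lt_of_le_of_ne (hmin i hi) him.symm)) _
  have hdvd_rest : (2 : ℤ) ^ (m + 1) ∣
      ∑ i ∈ (S \ T).erase m, ε i * 2 ^ i - ∑ i ∈ T \ S, ε i * 2 ^ i := by
    refine dvd_sub (dvd_sum fun i hi => ?_) (dvd_sum fun i hi => ?_)
    · obtain ⟨him, hi⟩ := mem_erase.mp hi
      exact hdvd_term i (mem_symmDiff.mpr (Or.inl (mem_sdiff.mp hi))) him
    · exact hdvd_term i (mem_symmDiff.mpr (Or.inr (mem_sdiff.mp hi)))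
        fun him => (mem_sdiff.mp hi).2 (him ▸ (mem_sdiff.mp hm).1)
  have hdvd : 2 * 2 ^ m ∣ ε m * 2 ^ m := by
    rw [← pow_succ']
    exact (dvd_add_left hdvd_rest).mp (hdiff ▸ dvd_zero _)
  exact Int.not_even_iff_odd.mpr (hε m)
    (even_iff_two_dvd.mpr ((mul_dvd_mul_iff_right (pow_ne_zero m two_ne_zero)).mp hdvd))

theorem sum_mul_two_pow_injective (hε : ∀ i, Odd (ε i)) :
    Function.Injective fun S : Finset ℕ => ∑ i ∈ S, ε i * 2 ^ i := by
  intro S T h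
  by_contra hST
  have hne := symmDiff_nonempty.mpr hST
  have hmin : ∀ i ∈ symmDiff S T, (symmDiff S T).min' hne ≤ i := fun i hi => min'_le _ _ hi
  rcases mem_symmDiff.mp (min'_mem _ hne) with hm | hm
  · exact sum_mul_two_pow_ne_of_min_mem_sdiff hε (mem_sdiff.mpr hm) hmin h
  · exact sum_mul_two_pow_ne_of_min_mem_sdiff hε (mem_sdiff.mpr hm)
      (symmDiff_comm S T ▸ hmin) h.symm

end SignedBinary

/-- Let `ε : ℕ → {-1, +1}` take the value `+1` infinitely often and the value `-1`
infinitely often. Then every integer `n` has a unique representation as a finite subset sum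
of the set `{ε(i)·2^i : i ∈ ℕ}`. -/
theorem stmt_12 (ε : ℕ → ℤ) (hval : ∀ i, ε i = 1 ∨ ε i = -1)
    (hpos : {i : ℕ | ε i = 1}.Infinite) (hneg : {i : ℕ | ε i = -1}.Infinite) (n : ℤ) :
    ∃! S : Finset ℕ, ∑ i ∈ S, ε i * 2 ^ i = n := by
  obtain ⟨S, hS⟩ := exists_sum_mul_two_pow_eq hval hpos hneg n
  have hodd (i : ℕ) : Odd (ε i) := by rcases hval i with h | h <;> simp [h]
  exact ⟨S, hS, fun T hT => sum_mul_two_pow_injective hodd (hT.trans hS.symm)⟩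
end

section
/- Let S = {m ∈ ℕ : every digit of the base-3 expansion of m is 0 or 1}. Then S contains no 3-term arithmetic progression, and for every t ≥ 0 the number of elements of S that are less than 3^t equals 2^t. -/
open Finset

namespace Nat

theorem forall_mem_digits_add_mul_iff {b r q : ℕ} {P : ℕ → Prop} (hb : 1 < b) (hr : r < b)
    (hP0 : P 0) : (∀ d ∈ digits b (r + b * q), P d) ↔ P r ∧ ∀ d ∈ digits b q, P d := by
  by_cases h : r = 0 ∧ q = 0
  · obtain ⟨rfl, rfl⟩ := h
    simp [hP0]
  · rw [digits_add b hb r q hr (by tauto), List.forall_mem_cons]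

theorem forall_mem_digits_iff_mod_div {b m : ℕ} {P : ℕ → Prop} (hb : 1 < b) (hP0 : P 0) :
    (∀ d ∈ digits b m, P d) ↔ P (m % b) ∧ ∀ d ∈ digits b (m / b), P d := by
  conv_lhs => rw [← mod_add_div m b]
  exact forall_mem_digits_add_mul_iff hb (mod_lt m (by omega)) hP0

/-- Carries never occur: the last digits satisfy `a₀ + c₀ = 2 b₀` exactly, which forces
`a₀ = c₀` since they lie in `{0, 1}`. -/
theorem eq_of_add_eq_two_mul_of_digits_zero_or_one {a b c : ℕ}
    (ha : ∀ d ∈ digits 3 a, d = 0 ∨ d = 1) (hb : ∀ d ∈ digits 3 b, d = 0 ∨ d = 1)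
    (hc : ∀ d ∈ digits 3 c, d = 0 ∨ d = 1) (h : a + c = 2 * b) : a = c := by
  induction b using Nat.strong_induction_on generalizing a c with
  | _ b ih =>
    rcases eq_or_ne b 0 with rfl | hb0
    · omega
    obtain ⟨ha₀, ha'⟩ := (forall_mem_digits_iff_mod_div (by norm_num) (Or.inl rfl)).1 ha
    obtain ⟨hb₀, hb'⟩ := (forall_mem_digits_iff_mod_div (by norm_num) (Or.inl rfl)).1 hb
    obtain ⟨hc₀, hc'⟩ := (forall_mem_digits_iff_mod_div (by norm_num) (Or.inl rfl)).1 hc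
    have hquot : a / 3 = c / 3 := ih (b / 3) (by omega) ha' hb' hc' (by omega)
    omega

theorem card_filter_forall_mem_digits_range_pow {b : ℕ} {P : ℕ → Prop} [DecidablePred P]
    (hb : 1 < b) (hP0 : P 0) (t : ℕ) :
    #{m ∈ range (b ^ t) | ∀ d ∈ digits b m, P d} = #{d ∈ range b | P d} ^ t := by
  induction t with
  | zero => simp [filter_singleton]
  | succ t ih =>
    nth_rw 2 [pow_succ']
    rw [← ih, ← card_product]
    refine card_nbij' (fun m ↦ (m % b, m / b)) (fun p ↦ p.1 + b * p.2) ?_ ?_ ?_ ?_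
    · intro m hm
      simp only [coe_filter, mem_range, Set.mem_ofPred_eq, coe_product, Set.mem_prod] at hm ⊢
      rw [forall_mem_digits_iff_mod_div hb hP0] at hm
      exact ⟨⟨mod_lt m (by omega), hm.2.1⟩, (div_lt_iff_lt_mul (by omega)).2 hm.1, hm.2.2⟩
    · rintro ⟨r, q⟩ hp
      simp only [coe_filter, mem_range, Set.mem_ofPred_eq, coe_product, Set.mem_prod] at hp ⊢
      obtain ⟨⟨hr, hPr⟩, hq, hq'⟩ := hp
      refine ⟨?_, (forall_mem_digits_add_mul_iff hb hr hP0).2 ⟨hPr, hq'⟩⟩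
      calc r + b * q < b * (q + 1) := by linarith
        _ ≤ b * b ^ t := Nat.mul_le_mul_left b hq
        _ = b ^ (t + 1) := pow_succ'.symm
    · intro m _
      exact mod_add_div m b
    · rintro ⟨r, q⟩ hp
      simp only [coe_filter, mem_range, Set.mem_ofPred_eq, coe_product, Set.mem_prod] at hp
      simp only [Prod.mk.injEq]
      constructor
      · rw [add_mul_mod_self_left, mod_eq_of_lt hp.1.1]
      · rw [add_mul_div_left _ _ (by omega), div_eq_of_lt hp.1.1, zero_add]

end Nat

/-- Let `S = {m ∈ ℕ : every digit of the base-3 expansion of m is 0 or 1}`. Then `S`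
contains no 3-term arithmetic progression, and for every `t ≥ 0` the number of elements
of `S` that are less than `3^t` equals `2^t`. -/
theorem stmt_14 :
    (¬ ∃ a ∈ {m : ℕ | ∀ d ∈ Nat.digits 3 m, d = 0 ∨ d = 1},
        ∃ b ∈ {m : ℕ | ∀ d ∈ Nat.digits 3 m, d = 0 ∨ d = 1},
          ∃ c ∈ {m : ℕ | ∀ d ∈ Nat.digits 3 m, d = 0 ∨ d = 1},
            a ≠ b ∧ a ≠ c ∧ b ≠ c ∧ a + c = 2 * b) ∧
      ∀ t : ℕ,
        ((Finset.range (3 ^ t)).filter (fun m => ∀ d ∈ Nat.digits 3 m, d = 0 ∨ d = 1)).card =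
          2 ^ t := by
  refine ⟨?_, fun t ↦ ?_⟩
  · rintro ⟨a, ha, b, hb, c, hc, -, hac, -, habc⟩
    exact hac (Nat.eq_of_add_eq_two_mul_of_digits_zero_or_one ha hb hc habc)
  · rw [Nat.card_filter_forall_mem_digits_range_pow (by norm_num) (Or.inl rfl)]
    rfl
end

section
/- Any geometric progression of k ≥ 3 distinct positive integers contains at most 2 squarefree numbers: if b_0, b_1, ..., b_{k-1} are distinct positive integers and there is a rational q with b_{i+1} = q·b_i for all 0 ≤ i < k-1, then at most two of the b_i are squarefree. In particular, if a, b, c are distinct positive integers with a·c = b², then at most two of a, b, c are squarefree. -/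
/-- Any geometric progression of `k ≥ 3` distinct positive integers contains at most 2
squarefree numbers. In particular, if `a, b, c` are distinct positive integers with
`a·c = b²`, then at most two of `a, b, c` are squarefree. -/
theorem stmt_15 :
    (∀ (k : ℕ) (b : ℕ → ℕ), 3 ≤ k → (∀ i < k, 0 < b i) →
      (∀ i < k, ∀ j < k, b i = b j → i = j) →
      (∃ q : ℚ, ∀ i, i + 1 < k → (b (i + 1) : ℚ) = q * (b i : ℚ)) →
      ((Finset.range k).filter (fun i => Squarefree (b i))).card ≤ 2) ∧
    (∀ a b c : ℕ, 0 < a → 0 < b → 0 < c → a ≠ b → a ≠ c → b ≠ c → a * c = b ^ 2 →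
      ¬ (Squarefree a ∧ Squarefree b ∧ Squarefree c)) := by
  have main : ∀ (k : ℕ) (b : ℕ → ℕ), 3 ≤ k → (∀ i < k, 0 < b i) →
      (∀ i < k, ∀ j < k, b i = b j → i = j) →
      (∃ q : ℚ, ∀ i, i + 1 < k → (b (i + 1) : ℚ) = q * (b i : ℚ)) →
      ((Finset.range k).filter (fun i => Squarefree (b i))).card ≤ 2 := by
    intro k b hk hpos hinj ⟨q, hq⟩
    by_contra hcard
    push_neg at hcard
    -- q > 0
    have hb0 : (0:ℚ) < (b 0 : ℚ) := by exact_mod_cast hpos 0 (by omega)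
    have hb1 : (0:ℚ) < (b 1 : ℚ) := by exact_mod_cast hpos 1 (by omega)
    have h01 : (b 1 : ℚ) = q * (b 0 : ℚ) := hq 0 (by omega)
    have hqpos : 0 < q := by nlinarith
    set m : ℕ := q.num.toNat with hm
    set n : ℕ := q.den with hn
    have hnumpos : 0 < q.num := Rat.num_pos.mpr hqpos
    have hmcast : (m : ℤ) = q.num := Int.toNat_of_nonneg hnumpos.le
    have hcop : Nat.Coprime m n := by
      have := q.reduced
      rwa [show m = q.num.natAbs by omega]
    -- step relation in ℕ
    have hmq : (m : ℚ) = q * (n : ℚ) := by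
      have h1 : ((m : ℤ) : ℚ) = ((q.num : ℤ) : ℚ) := by exact_mod_cast congrArg (fun z : ℤ => (z : ℚ)) hmcast
      have h2 : q * (q.den : ℚ) = (q.num : ℚ) := Rat.mul_den_eq_num q
      push_cast at h1
      rw [h1, hn, h2]
    have key : ∀ i, i + 1 < k → b (i+1) * n = b i * m := by
      intro i hi
      have h := hq i hi
      have : ((b (i+1) : ℚ)) * (n : ℚ) = (b i : ℚ) * (m : ℚ) := by
        rw [h, hmq]; ring
      exact_mod_cast this
    have pow : ∀ j i, i + j < k → b (i+j) * n^j = b i * m^j := by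
      intro j
      induction j with
      | zero => simp
      | succ j ih =>
        intro i hij
        have h1 : b (i+j+1) * n = b (i+j) * m := key (i+j) (by omega)
        have h2 : b (i+j) * n^j = b i * m^j := ih i (by omega)
        have e : i + (j+1) = (i+j)+1 := by omega
        rw [e]
        calc b ((i+j)+1) * n^(j+1) = (b ((i+j)+1) * n) * n^j := by ring
          _ = (b (i+j) * m) * n^j := by rw [h1]
          _ = (b (i+j) * n^j) * m := by ring
          _ = (b i * m^j) * m := by rw [h2]
          _ = b i * m^(j+1) := by ring
    have hmdvd : ∀ j, j < k → m^j ∣ b j := by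
      intro j hj
      have h := pow j 0 (by omega)
      simp only [Nat.zero_add] at h
      have : m^j ∣ b j * n^j := ⟨b 0, by linarith [h]⟩
      exact (Nat.Coprime.pow _ _ hcop).dvd_of_dvd_mul_right this
    have hndvd : ∀ i j, i + j < k → n^j ∣ b i := by
      intro i j hij
      have h := pow j i hij
      have : n^j ∣ b i * m^j := ⟨b (i+j), by linarith [h]⟩
      exact (Nat.Coprime.pow _ _ hcop.symm).dvd_of_dvd_mul_right this
    -- extract min and max squarefree indices
    set s := (Finset.range k).filter (fun i => Squarefree (b i)) with hs
    have hsne : s.Nonempty := Finset.card_pos.mp (by omega)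
    set i1 := s.min' hsne with hi1
    set i3 := s.max' hsne with hi3
    have hmem1 := s.min'_mem hsne
    have hmem3 := s.max'_mem hsne
    have hsq1 : Squarefree (b i1) := (Finset.mem_filter.mp hmem1).2
    have hsq3 : Squarefree (b i3) := (Finset.mem_filter.mp hmem3).2
    have hlt3 : i3 < k := Finset.mem_range.mp (Finset.mem_filter.mp hmem3).1
    have hsub : s ⊆ Finset.Icc i1 i3 := by
      intro x hx
      exact Finset.mem_Icc.mpr ⟨s.min'_le x hx, s.le_max' x hx⟩
    have hgap : i1 + 2 ≤ i3 := by
      have := Finset.card_le_card hsub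
      rw [Nat.card_Icc] at this
      omega
    -- m = 1
    have hm1 : m = 1 := by
      have h2 : m * m ∣ b i3 := by
        have : m^2 ∣ m^i3 := pow_dvd_pow m (by omega)
        have := this.trans (hmdvd i3 hlt3)
        rwa [pow_two] at this
      exact Nat.isUnit_iff.mp (hsq3 m h2)
    -- n = 1
    have hn1 : n = 1 := by
      have h2 : n * n ∣ b i1 := by
        have hd : n^(k-1-i1) ∣ b i1 := hndvd i1 (k-1-i1) (by omega)
        have : n^2 ∣ n^(k-1-i1) := pow_dvd_pow n (by omega)
        have := this.trans hd
        rwa [pow_two] at this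
      exact Nat.isUnit_iff.mp (hsq1 n h2)
    have : b 1 = b 0 := by
      have := key 0 (by omega)
      simpa [hm1, hn1] using this
    have := hinj 1 (by omega) 0 (by omega) this
    omega
  refine ⟨main, ?_⟩
  intro a b c ha hb hc hab hac hbc habc ⟨sa, sb, sc⟩
  obtain ⟨f, f0, f1, f2⟩ : ∃ f : ℕ → ℕ, f 0 = a ∧ f 1 = b ∧ f 2 = c :=
    ⟨fun i => if i = 0 then a else if i = 1 then b else c, rfl, rfl, rfl⟩
  have ha' : (a : ℚ) ≠ 0 := Nat.cast_ne_zero.mpr ha.ne'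
  have h := main 3 f le_rfl
    (by intro i hi; interval_cases i
        · rw [f0]; exact ha
        · rw [f1]; exact hb
        · rw [f2]; exact hc)
    (by intro i hi j hj hij
        interval_cases i <;> interval_cases j <;>
          first
          | rfl
          | (rw [f0, f1] at hij; exact absurd hij hab)
          | (rw [f0, f2] at hij; exact absurd hij hac)
          | (rw [f1, f2] at hij; exact absurd hij hbc)
          | (rw [f1, f0] at hij; exact absurd hij.symm hab)
          | (rw [f2, f0] at hij; exact absurd hij.symm hac)
          | (rw [f2, f1] at hij; exact absurd hij.symm hbc))
    ?_
  · have hfull : (Finset.range 3).filter (fun i => Squarefree (f i)) = Finset.range 3 := by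
      apply Finset.filter_true_of_mem
      intro i hi
      have : i < 3 := Finset.mem_range.mp hi
      interval_cases i
      · rw [f0]; exact sa
      · rw [f1]; exact sb
      · rw [f2]; exact sc
    rw [hfull] at h
    simp at h
  · refine ⟨(b : ℚ) / (a : ℚ), ?_⟩
    intro i hi
    have hi2 : i ≤ 1 := by omega
    interval_cases i
    · rw [show (0:ℕ)+1 = 1 from rfl, f0, f1]
      field_simp
    · rw [show (1:ℕ)+1 = 2 from rfl, f1, f2]
      have h2 : (c : ℚ) * a = (b : ℚ) * b := by
        have : c * a = b * b := by rw [mul_comm]; simpa [pow_two] using habc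
        exact_mod_cast this
      rw [div_mul_eq_mul_div, eq_div_iff ha']
      linarith
end

section
/- (O'Bryant) Let A be a finite nonempty set of positive integers. Then |A·A + A| ≥ |A|². Consequently, if |A| ≥ 3 then |A·A + A| ≥ |A + A|, i.e., no set of 3 or more positive integers satisfies |A·A + A| < |A+A|. -/
open Pointwise

/-- (O'Bryant) Let `A` be a finite nonempty set of positive integers. Then
`|A·A + A| ≥ |A|²`. Consequently, if `|A| ≥ 3` then `|A·A + A| ≥ |A + A|`, i.e., no set
of 3 or more positive integers satisfies `|A·A + A| < |A+A|`. -/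
theorem stmt_16 (A : Finset ℕ) (hne : A.Nonempty) (hpos : ∀ a ∈ A, 0 < a) :
    A.card ^ 2 ≤ (A * A + A).card ∧ (3 ≤ A.card → (A + A).card ≤ (A * A + A).card) := by
  obtain ⟨m, hmA, hmax⟩ : ∃ m ∈ A, ∀ a ∈ A, a ≤ m :=
    ⟨A.max' hne, A.max'_mem hne, fun a ha => A.le_max' a ha⟩
  have hm : 0 < m := hpos m hmA
  have hrec : ∀ a b : ℕ, 1 ≤ b → b ≤ m → (m * a + b - 1) / m = a := by
    intro a b hb1 hb2
    have h1 : m * a + b - 1 = (b - 1) + m * a := by omega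
    rw [h1, Nat.add_mul_div_left _ _ hm, Nat.div_eq_of_lt (by omega), Nat.zero_add]
  have hinj : Set.InjOn (fun p : ℕ × ℕ => m * p.1 + p.2) (A ×ˢ A : Finset (ℕ × ℕ)) := by
    intro p hp q hq h
    simp only [Finset.coe_product, Set.mem_prod, Finset.mem_coe] at hp hq
    simp only at h
    have hp2 := hpos _ hp.2
    have hq2 := hpos _ hq.2
    have hp2' := hmax _ hp.2
    have hq2' := hmax _ hq.2
    have e1 : p.1 = q.1 := by
      have := hrec p.1 p.2 hp2 hp2'
      have := hrec q.1 q.2 hq2 hq2'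
      rw [h] at *
      omega
    have e2 : p.2 = q.2 := by rw [e1] at h; omega
    exact Prod.ext e1 e2
  have hsub : (A ×ˢ A).image (fun p : ℕ × ℕ => m * p.1 + p.2) ⊆ A * A + A := by
    intro x hx
    simp only [Finset.mem_image, Finset.mem_product] at hx
    obtain ⟨⟨a, b⟩, ⟨ha, hb⟩, rfl⟩ := hx
    exact Finset.add_mem_add (Finset.mul_mem_mul hmA ha) hb
  have hcard : A.card ^ 2 ≤ (A * A + A).card := by
    calc A.card ^ 2 = (A ×ˢ A).card := by rw [Finset.card_product, sq]
    _ = ((A ×ˢ A).image (fun p : ℕ × ℕ => m * p.1 + p.2)).card :=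
        (Finset.card_image_of_injOn hinj).symm
    _ ≤ (A * A + A).card := Finset.card_le_card hsub
  refine ⟨hcard, fun _ => ?_⟩
  calc (A + A).card ≤ A.card * A.card := Finset.card_add_le
  _ = A.card ^ 2 := (sq A.card).symm
  _ ≤ (A * A + A).card := hcard
end
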